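/- arXiv:1401.2761 — 2 statements merged into one kernel-verified Lean document; each statement's English description precedes it below -/
import Mathlib

section
/- Let R be a commutative ring, T = T(R), H = R^• its monoid of regular elements, Q = q(H). For every subset 𝔞 ⊆ Q, the set of regular elements of (R :_T 𝔞) equals (H :_Q 𝔞), and (𝔞_{v_R})^• ⊆ 𝔞_{v_H}. -/
open scoped Pointwise

/-- For subsets `Z, X` of the total quotient ring `T`, the colon set
`(Z : X) = {a ∈ T | a X ⊆ Z}`. -/
def colonSet (T : Type*) [CommRing T] (Z X : Set T) : Set T :=
  {a : T | ∀ x ∈ X, a * x ∈ Z}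

/-- The image of `R` inside its total quotient ring `T`. -/
def ringSet (R T : Type*) [CommRing R] [CommRing T] [Algebra R T] : Set T :=
  Set.range (algebraMap R T)

/-- `X⁻¹ = (R : X)` for a subset `X ⊆ T`. -/
def invSet (R T : Type*) [CommRing R] [CommRing T] [Algebra R T] (X : Set T) : Set T :=
  colonSet T (ringSet R T) X

/-- The divisorial (v-) closure `X_v = (X⁻¹)⁻¹` of a subset `X ⊆ T`. -/
def vSet (R T : Type*) [CommRing R] [CommRing T] [Algebra R T] (X : Set T) : Set T :=
  invSet R T (invSet R T X)

/-- The set of regular elements (non-zero-divisors) of `T`. -/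
def regSet (T : Type*) [CommRing T] : Set T :=
  {t : T | t ∈ nonZeroDivisors T}

/-- The colon set computed inside `Q = T^• ` : `(Z :_Q X) = {a ∈ Q | a X ⊆ Z}`. -/
def colonQ (T : Type*) [CommRing T] (Z X : Set T) : Set T :=
  {a : T | a ∈ nonZeroDivisors T ∧ ∀ x ∈ X, a * x ∈ Z}

/-- The monoid `H = R^•` of regular elements of `R`, viewed inside `T`. -/
def HSet (R T : Type*) [CommRing R] [CommRing T] [Algebra R T] : Set T :=
  ringSet R T ∩ regSet T

/-- The v-closure of a subset of `Q = T^•` with respect to the monoid `H = R^•`. -/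
def vMon (R T : Type*) [CommRing R] [CommRing T] [Algebra R T] (X : Set T) : Set T :=
  colonQ T (HSet R T) (colonQ T (HSet R T) X)

/-- `X ⊆ T` is `R`-fractional: `cX ⊆ R` for some regular `c ∈ R^•`. -/
def isFrac (R T : Type*) [CommRing R] [CommRing T] [Algebra R T] (X : Set T) : Prop :=
  ∃ c : R, c ∈ nonZeroDivisors R ∧ ∀ x ∈ X, algebraMap R T c * x ∈ ringSet R T

/-- The complete integral closure `R̂` of `R` in `T`. -/
def hatSet (R T : Type*) [CommRing R] [CommRing T] [Algebra R T] : Set T :=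
  {x : T | ∃ c : R, c ∈ nonZeroDivisors R ∧
    ∀ n : ℕ, 1 ≤ n → algebraMap R T c * x ^ n ∈ ringSet R T}

/-- The complete integral closure `Ĥ` of the monoid `H = R^•` in `q(H) = T^•`. -/
def monHat (R T : Type*) [CommRing R] [CommRing T] [Algebra R T] : Set T :=
  {x : T | x ∈ nonZeroDivisors T ∧
    ∃ c ∈ HSet R T, ∀ n : ℕ, 1 ≤ n → c * x ^ n ∈ HSet R T}

/-- `R` is a v-Marot ring: every regular fractional divisorial ideal is
v-generated by its regular elements. -/
def isVMarot (R T : Type*) [CommRing R] [CommRing T] [Algebra R T] : Prop :=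
  ∀ I : Set T, (I ∩ regSet T).Nonempty → isFrac R T I → vSet R T I = I →
    I = vSet R T (I ∩ regSet T)

theorem colonSet_inter_regSet_eq_colonQ {T : Type*} [CommRing T] {Z X : Set T}
    (hX : X ⊆ regSet T) : colonSet T Z X ∩ regSet T = colonQ T (Z ∩ regSet T) X := by
  ext a
  constructor
  · rintro ⟨ha, hreg⟩
    exact ⟨hreg, fun x hx => ⟨ha x hx, (mul_mem hreg (hX hx) : _ ∈ nonZeroDivisors T)⟩⟩
  · rintro ⟨hreg, ha⟩
    exact ⟨fun x hx => (ha x hx).1, hreg⟩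

theorem colonSet_anti {T : Type*} [CommRing T] {Z X Y : Set T} (h : X ⊆ Y) :
    colonSet T Z Y ⊆ colonSet T Z X :=
  fun _ ha x hx => ha x (h hx)

theorem stmt9_general (R T : Type*) [CommRing R] [CommRing T] [Algebra R T]
    (𝔞 : Set T) (h𝔞 : 𝔞 ⊆ regSet T) :
    colonSet T (ringSet R T) 𝔞 ∩ regSet T = colonQ T (HSet R T) 𝔞 ∧
      vSet R T 𝔞 ∩ regSet T ⊆ vMon R T 𝔞 := by
  have hinv : colonSet T (ringSet R T) 𝔞 ∩ regSet T = colonQ T (HSet R T) 𝔞 :=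
    colonSet_inter_regSet_eq_colonQ h𝔞
  refine ⟨hinv, ?_⟩
  calc vSet R T 𝔞 ∩ regSet T
      ⊆ colonSet T (ringSet R T) (colonQ T (HSet R T) 𝔞) ∩ regSet T := by
        rw [← hinv]
        exact Set.inter_subset_inter_left _ (colonSet_anti Set.inter_subset_left)
    _ = vMon R T 𝔞 := colonSet_inter_regSet_eq_colonQ fun _ ha => ha.1

theorem stmt9 (R T : Type*) [CommRing R] [CommRing T] [Algebra R T] [IsFractionRing R T]
    (𝔞 : Set T) (h𝔞 : 𝔞 ⊆ regSet T) :
    colonSet T (ringSet R T) 𝔞 ∩ regSet T = colonQ T (HSet R T) 𝔞 ∧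
      vSet R T 𝔞 ∩ regSet T ⊆ vMon R T 𝔞 :=
  stmt9_general R T 𝔞 h𝔞
end

section
/- Every Marot ring is a v-Marot ring; that is, if every regular ideal of a commutative ring R is generated as an R-module by its regular elements, then every regular divisorial ideal I of R satisfies I = (I^•)_v. -/
open scoped Pointwise

/-
Since `I = I_v` is the double dual `(R : (R : I))`, it is an `R`-submodule of `T`, and as
`I ⊆ R` its preimage `J` in `R` is a regular ideal of `R`. The Marot property writes `J` as the
span of its regular elements, so `I` lies in the `R`-span of `I^•`. That span is contained in
the submodule `(I^•)_v`, and conversely `(I^•)_v ⊆ I_v = I`.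
-/

section Divisorial

variable (R : Type*) {T : Type*} [CommRing R] [CommRing T] [Algebra R T]

def invSubmodule (X : Set T) : Submodule R T where
  carrier := invSet R T X
  add_mem' {a b} ha hb x hx := by
    obtain ⟨r, hr⟩ := ha x hx
    obtain ⟨s, hs⟩ := hb x hx
    exact ⟨r + s, by rw [map_add, hr, hs, add_mul]⟩
  zero_mem' _ _ := ⟨0, by rw [map_zero, zero_mul]⟩
  smul_mem' c a ha x hx := by
    obtain ⟨r, hr⟩ := ha x hx
    exact ⟨c * r, by rw [map_mul, hr, Algebra.smul_def, mul_assoc]⟩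

theorem invSet_antitone : Antitone (invSet R T) :=
  fun _ _ hXY _ ha x hx => ha x (hXY hx)

theorem vSet_mono : Monotone (vSet R T) :=
  fun _ _ hXY => invSet_antitone R (invSet_antitone R hXY)

theorem subset_vSet (X : Set T) : X ⊆ vSet R T X := by
  intro x hx a ha
  obtain ⟨r, hr⟩ := ha x hx
  exact ⟨r, by rw [hr, mul_comm]⟩

theorem span_subset_vSet (X : Set T) : (Submodule.span R X : Set T) ⊆ vSet R T X :=
  Submodule.span_le (p := invSubmodule R (invSet R T X)) |>.mpr (subset_vSet R X)

end Divisorial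

def IsMarotRing (R : Type*) [CommRing R] : Prop :=
  ∀ I : Ideal R, ((I : Set R) ∩ {r : R | r ∈ nonZeroDivisors R}).Nonempty →
    I = Ideal.span ((I : Set R) ∩ {r : R | r ∈ nonZeroDivisors R})

section Marot

variable {R T : Type*} [CommRing R] [CommRing T] [Algebra R T] [IsFractionRing R T]

theorem algebraMap_mem_nonZeroDivisors_iff {r : R} :
    algebraMap R T r ∈ nonZeroDivisors T ↔ r ∈ nonZeroDivisors R :=
  ⟨mem_nonZeroDivisors_of_injective (IsFractionRing.injective R T),
    fun hr => IsLocalization.nonZeroDivisors_le_comap (nonZeroDivisors R) T hr⟩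

theorem IsMarotRing.subset_span_regular (hR : IsMarotRing R) {M : Submodule R T}
    (hMR : (M : Set T) ⊆ ringSet R T) (hreg : ((M : Set T) ∩ regSet T).Nonempty) :
    (M : Set T) ⊆ Submodule.span R ((M : Set T) ∩ regSet T) := by
  set J : Ideal R := M.comap (Algebra.linearMap R T)
  have hJreg : ((J : Set R) ∩ {r : R | r ∈ nonZeroDivisors R}).Nonempty := by
    obtain ⟨_, huM, hureg⟩ := hreg
    obtain ⟨s, rfl⟩ := hMR huM
    exact ⟨s, huM, algebraMap_mem_nonZeroDivisors_iff.mp hureg⟩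
  have hJimage : algebraMap R T '' ((J : Set R) ∩ {r : R | r ∈ nonZeroDivisors R}) ⊆
      (M : Set T) ∩ regSet T := by
    rintro _ ⟨t, ⟨htJ, htreg⟩, rfl⟩
    exact ⟨htJ, algebraMap_mem_nonZeroDivisors_iff.mpr htreg⟩
  rintro _ hxM
  obtain ⟨r, rfl⟩ := hMR hxM
  have hrJ : r ∈ Ideal.span ((J : Set R) ∩ {r : R | r ∈ nonZeroDivisors R}) :=
    hR J hJreg ▸ hxM
  have hmap := Submodule.mem_map_of_mem (f := Algebra.linearMap R T) hrJ
  rw [Submodule.map_span] at hmap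
  exact Submodule.span_mono hJimage hmap

end Marot

theorem stmt11 (R T : Type*) [CommRing R] [CommRing T] [Algebra R T] [IsFractionRing R T]
    (hMarot : ∀ I : Ideal R, ((I : Set R) ∩ {r : R | r ∈ nonZeroDivisors R}).Nonempty →
      I = Ideal.span ((I : Set R) ∩ {r : R | r ∈ nonZeroDivisors R})) :
    ∀ I : Set T, I ⊆ ringSet R T → (I ∩ regSet T).Nonempty → vSet R T I = I →
      I = vSet R T (I ∩ regSet T) := by
  intro I hIR hreg hv
  set M : Submodule R T := invSubmodule R (invSet R T I)
  have hMI : (M : Set T) = I := hv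
  refine Set.Subset.antisymm ?_ ((vSet_mono R Set.inter_subset_left).trans hv.subset)
  calc I = M := hMI.symm
    _ ⊆ Submodule.span R ((M : Set T) ∩ regSet T) :=
      IsMarotRing.subset_span_regular hMarot (hMI ▸ hIR) (hMI ▸ hreg)
    _ ⊆ vSet R T (I ∩ regSet T) := hMI ▸ span_subset_vSet R _
end
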